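/- arXiv:1706.03955 — 6 statements merged into one kernel-verified Lean document; each statement's English description precedes it below -/
import Mathlib

section
/- If random variables X1 and X2 are conditionally independent given X3 (meaning the conditional distribution of (X1,X2) given X3 equals the product of the conditional distributions of X1 given X3 and X2 given X3, almost surely with respect to the law of X3), then X1 and X2 are independent if and only if the Markov kernels P^{X1|X3} and P^{X2|X3} are independent with respect to P^{X3} (i.e., the image under P^{X3} of the diagonal product kernel equals the product of the images of the two kernels). -/
open MeasureTheory ProbabilityTheory

/-- The image (probability distribution) of a Markov kernel `M` under a measure `Q`:
`Q^M (A) = ∫ M(ω, A) dQ(ω)`. -/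
noncomputable def kernelImage {α β : Type*} [MeasurableSpace α] [MeasurableSpace β]
    (Q : Measure α) (M : ProbabilityTheory.Kernel α β) : Measure β :=
  Q.bind (fun a => M a)

/-- Two Markov kernels `M1, M2` on a probability space `(α, Q)` are `Q`-independent if the
image of their diagonal product is the product of their images. -/
def KernelIndep {α β γ : Type*} [MeasurableSpace α] [MeasurableSpace β] [MeasurableSpace γ]
    (Q : Measure α) (M1 : ProbabilityTheory.Kernel α β) (M2 : ProbabilityTheory.Kernel α γ) :
    Prop :=
  kernelImage Q (M1 ×ₖ M2) = (kernelImage Q M1).prod (kernelImage Q M2)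

/-!
The law of `X3` pushed through `P^{X|X3}` is the law of `X`. Applied to `X1`, `X2` and, via
conditional independence, to the pair `(X1, X2)`, this identifies the three images in
`KernelIndep` with `P^{X1}`, `P^{X2}` and `P^{(X1, X2)}`, so kernel independence becomes
`P^{(X1, X2)} = P^{X1} × P^{X2}`.
-/

section KernelImage

variable {α β : Type*} [MeasurableSpace α] [MeasurableSpace β]

lemma kernelImage_congr_ae {Q : Measure α} {M M' : Kernel α β} (h : ∀ᵐ a ∂Q, M a = M' a) :
    kernelImage Q M = kernelImage Q M' :=
  Measure.comp_congr h

lemma kernelImage_map_condDistrib {Ω : Type*} [MeasurableSpace Ω] [StandardBorelSpace β]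
    [Nonempty β] {P : Measure Ω} [IsFiniteMeasure P] {X : Ω → β} {Y : Ω → α}
    (hX : AEMeasurable X P) (hY : AEMeasurable Y P) :
    kernelImage (P.map Y) (condDistrib X Y P) = P.map X :=
  condDistrib_comp_map hY hX

end KernelImage

/-- If `X1` and `X2` are conditionally independent given `X3`, then `X1` and `X2` are
independent iff the Markov kernels `P^{X1|X3}` and `P^{X2|X3}` are `P^{X3}`-independent. -/
theorem stmt0 {Ω Ω1 Ω2 Ω3 : Type*} [MeasurableSpace Ω] [MeasurableSpace Ω1] [MeasurableSpace Ω2]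
    [MeasurableSpace Ω3] [StandardBorelSpace Ω1] [Nonempty Ω1] [StandardBorelSpace Ω2]
    [Nonempty Ω2]
    (P : Measure Ω) [IsProbabilityMeasure P]
    (X1 : Ω → Ω1) (X2 : Ω → Ω2) (X3 : Ω → Ω3)
    (hX1 : Measurable X1) (hX2 : Measurable X2) (hX3 : Measurable X3)
    (hci : ∀ᵐ ω3 ∂(P.map X3),
      condDistrib (fun ω => (X1 ω, X2 ω)) X3 P ω3
        = (condDistrib X1 X3 P ×ₖ condDistrib X2 X3 P) ω3) :
    IndepFun X1 X2 P ↔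
      KernelIndep (P.map X3) (condDistrib X1 X3 P) (condDistrib X2 X3 P) := by
  have h1 := kernelImage_map_condDistrib (P := P) hX1.aemeasurable hX3.aemeasurable
  have h2 := kernelImage_map_condDistrib (P := P) hX2.aemeasurable hX3.aemeasurable
  have h12 : kernelImage (P.map X3) (condDistrib X1 X3 P ×ₖ condDistrib X2 X3 P)
      = P.map (fun ω => (X1 ω, X2 ω)) := by
    rw [← kernelImage_congr_ae hci,
      kernelImage_map_condDistrib (hX1.prodMk hX2).aemeasurable hX3.aemeasurable]
  rw [indepFun_iff_map_prod_eq_prod_map_map hX1.aemeasurable hX2.aemeasurable,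
    KernelIndep, h1, h2, h12]
end

section
/- The Markov kernels P^{X1|X3} and P^{X2|X3} are independent with respect to P^{X3} if and only if for every pair of bounded real measurable functions f1 on Ω1 and f2 on Ω2, the conditional expectations E[f1(X1)|X3] and E[f2(X2)|X3] are uncorrelated, i.e., E[ E(f1∘X1|X3) · E(f2∘X2|X3) ] = E(f1∘X1) · E(f2∘X2). -/
open MeasureTheory ProbabilityTheory

/-!
With `Mᵢ = P^{Xᵢ|X3}` and `Q = P^{X3}`, disintegration gives `E(fᵢ∘Xᵢ|X3) = (∫ fᵢ dMᵢ)∘X3`, so the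
left-hand side is `∫ f1 ⊗ f2 dQ^{M1×M2}`, while `Q^{Mᵢ} = P^{Xᵢ}` turns the right-hand side into
`∫ f1 ⊗ f2 d(Q^{M1} × Q^{M2})`. Two finite measures on a product space agree as soon as they
integrate all such products alike: indicators of measurable rectangles already suffice.
-/

lemma kernelImage_eq_comp {α β : Type*} [MeasurableSpace α] [MeasurableSpace β]
    (Q : Measure α) (M : Kernel α β) : kernelImage Q M = M ∘ₘ Q :=
  rfl

lemma MeasureTheory.Measure.integral_comp {α β E : Type*} [MeasurableSpace α] [MeasurableSpace β]
    [NormedAddCommGroup E] [NormedSpace ℝ E] (Q : Measure α) [SFinite Q] (M : Kernel α β)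
    [IsSFiniteKernel M] {f : β → E} (hf : Integrable f (M ∘ₘ Q)) :
    ∫ y, f y ∂(M ∘ₘ Q) = ∫ a, ∫ y, f y ∂(M a) ∂Q := by
  rw [← Measure.snd_compProd, Measure.snd] at hf ⊢
  rw [integral_map measurable_snd.aemeasurable hf.aestronglyMeasurable,
    Measure.integral_compProd (f := fun p => f p.2) (hf.comp_measurable measurable_snd)]

lemma integral_mul_comp_kernel_prod {α β γ : Type*} [MeasurableSpace α] [MeasurableSpace β]
    [MeasurableSpace γ] (Q : Measure α) [IsFiniteMeasure Q] (M1 : Kernel α β) (M2 : Kernel α γ)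
    [IsMarkovKernel M1] [IsMarkovKernel M2] {f : β → ℝ} {g : γ → ℝ}
    (hf : Measurable f) (hg : Measurable g) {C D : ℝ} (hfC : ∀ x, |f x| ≤ C)
    (hgD : ∀ y, |g y| ≤ D) :
    ∫ p, f p.1 * g p.2 ∂((M1 ×ₖ M2) ∘ₘ Q) = ∫ a, (∫ x, f x ∂(M1 a)) * (∫ y, g y ∂(M2 a)) ∂Q := by
  have hbound : ∀ p : β × γ, ‖f p.1 * g p.2‖ ≤ C * D := fun p => by
    rw [norm_mul]
    exact mul_le_mul (hfC _) (hgD _) (norm_nonneg _) ((abs_nonneg _).trans (hfC p.1))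
  rw [Measure.integral_comp _ _ <| .of_bound (f := fun p : β × γ => f p.1 * g p.2)
    ((hf.comp measurable_fst).mul (hg.comp measurable_snd)).aestronglyMeasurable _
    (ae_of_all _ hbound)]
  simp only [Kernel.prod_apply, integral_prod_mul]

lemma integral_condExp_mul_condExp {Ω Ω1 Ω2 Ω3 : Type*} [MeasurableSpace Ω] [MeasurableSpace Ω1]
    [MeasurableSpace Ω2] [MeasurableSpace Ω3] [StandardBorelSpace Ω1] [Nonempty Ω1]
    [StandardBorelSpace Ω2] [Nonempty Ω2] (P : Measure Ω) [IsFiniteMeasure P]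
    {X1 : Ω → Ω1} {X2 : Ω → Ω2} {X3 : Ω → Ω3}
    (hX1 : AEMeasurable X1 P) (hX2 : AEMeasurable X2 P) (hX3 : Measurable X3)
    {f1 : Ω1 → ℝ} {f2 : Ω2 → ℝ} (hf1 : Measurable f1) (hf2 : Measurable f2)
    {C1 C2 : ℝ} (hC1 : ∀ x, |f1 x| ≤ C1) (hC2 : ∀ x, |f2 x| ≤ C2) :
    ∫ ω, (P[fun ω' => f1 (X1 ω') | MeasurableSpace.comap X3 inferInstance]) ω
        * (P[fun ω' => f2 (X2 ω') | MeasurableSpace.comap X3 inferInstance]) ω ∂P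
      = ∫ x, (∫ y, f1 y ∂(condDistrib X1 X3 P x)) * (∫ y, f2 y ∂(condDistrib X2 X3 P x))
          ∂(P.map X3) := by
  have h1 := condExp_ae_eq_integral_condDistrib hX3 hX1 hf1.stronglyMeasurable <|
    .of_bound (hf1.comp_aemeasurable hX1).aestronglyMeasurable C1 (ae_of_all _ fun _ => hC1 _)
  have h2 := condExp_ae_eq_integral_condDistrib hX3 hX2 hf2.stronglyMeasurable <|
    .of_bound (hf2.comp_aemeasurable hX2).aestronglyMeasurable C2 (ae_of_all _ fun _ => hC2 _)
  have hg1 : StronglyMeasurable fun x => ∫ y, f1 y ∂(condDistrib X1 X3 P x) :=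
    (hf1.stronglyMeasurable.comp_measurable measurable_snd).integral_kernel_prod_right'
  have hg2 : StronglyMeasurable fun x => ∫ y, f2 y ∂(condDistrib X2 X3 P x) :=
    (hf2.stronglyMeasurable.comp_measurable measurable_snd).integral_kernel_prod_right'
  exact (integral_congr_ae (h1.mul h2)).trans
    (integral_map hX3.aemeasurable (hg1.mul hg2).aestronglyMeasurable).symm

lemma MeasureTheory.Measure.eq_prod_iff_integral_mul {β γ : Type*} [MeasurableSpace β]
    [MeasurableSpace γ] (μ : Measure (β × γ)) [IsFiniteMeasure μ] (ν1 : Measure β) (ν2 : Measure γ)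
    [IsFiniteMeasure ν1] [IsFiniteMeasure ν2] :
    μ = ν1.prod ν2 ↔ ∀ (f : β → ℝ) (g : γ → ℝ), Measurable f → Measurable g →
      (∃ C, ∀ x, |f x| ≤ C) → (∃ D, ∀ y, |g y| ≤ D) →
      ∫ p, f p.1 * g p.2 ∂μ = (∫ x, f x ∂ν1) * (∫ y, g y ∂ν2) := by
  refine ⟨by rintro rfl f g - - - -; exact integral_prod_mul f g, fun h => ?_⟩
  refine (Measure.prod_eq fun A B hA hB => ?_).symm
  have hrect := h (A.indicator 1) (B.indicator 1) (measurable_one.indicator hA)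
    (measurable_one.indicator hB)
    ⟨1, fun x => by simpa using norm_indicator_le_norm_self (1 : β → ℝ) x⟩
    ⟨1, fun y => by simpa using norm_indicator_le_norm_self (1 : γ → ℝ) y⟩
  simp_rw [← Set.indicator_prod_one, Prod.eta] at hrect
  rwa [integral_indicator_one (hA.prod hB), integral_indicator_one hA, integral_indicator_one hB,
    ← measureReal_prod_prod, measureReal_eq_measureReal_iff, Measure.prod_prod] at hrect

/-- The Markov kernels `P^{X1|X3}` and `P^{X2|X3}` are `P^{X3}`-independent iff for all
bounded real measurable `f1, f2`:
`E[E(f1∘X1|X3)·E(f2∘X2|X3)] = E(f1∘X1)·E(f2∘X2)`. -/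
theorem stmt4 {Ω Ω1 Ω2 Ω3 : Type*} [MeasurableSpace Ω] [MeasurableSpace Ω1] [MeasurableSpace Ω2]
    [MeasurableSpace Ω3] [StandardBorelSpace Ω1] [Nonempty Ω1] [StandardBorelSpace Ω2]
    [Nonempty Ω2]
    (P : Measure Ω) [IsProbabilityMeasure P]
    (X1 : Ω → Ω1) (X2 : Ω → Ω2) (X3 : Ω → Ω3)
    (hX1 : Measurable X1) (hX2 : Measurable X2) (hX3 : Measurable X3) :
    KernelIndep (P.map X3) (condDistrib X1 X3 P) (condDistrib X2 X3 P)
      ↔ ∀ (f1 : Ω1 → ℝ) (f2 : Ω2 → ℝ), Measurable f1 → Measurable f2 →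
          (∃ C1, ∀ x, |f1 x| ≤ C1) → (∃ C2, ∀ x, |f2 x| ≤ C2) →
          ∫ ω, (P[fun ω' => f1 (X1 ω') | MeasurableSpace.comap X3 inferInstance]) ω
              * (P[fun ω' => f2 (X2 ω') | MeasurableSpace.comap X3 inferInstance]) ω ∂P
            = (∫ ω, f1 (X1 ω) ∂P) * (∫ ω, f2 (X2 ω) ∂P) := by
  rw [KernelIndep, kernelImage_eq_comp, kernelImage_eq_comp, kernelImage_eq_comp,
    condDistrib_comp_map hX3.aemeasurable hX1.aemeasurable,
    condDistrib_comp_map hX3.aemeasurable hX2.aemeasurable, Measure.eq_prod_iff_integral_mul]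
  refine forall₄_congr fun f1 f2 hf1 hf2 => forall₂_congr fun ⟨C1, hC1⟩ ⟨C2, hC2⟩ => ?_
  rw [integral_condExp_mul_condExp P hX1.aemeasurable hX2.aemeasurable hX3 hf1 hf2 hC1 hC2,
    integral_mul_comp_kernel_prod _ _ _ hf1 hf2 hC1 hC2,
    integral_map hX1.aemeasurable hf1.aestronglyMeasurable,
    integral_map hX2.aemeasurable hf2.aestronglyMeasurable]
end

section
/- There exist random variables X1, X2, X3 on a finite probability space such that X1 and X2 are independent and the kernels P^{X1|X3} and P^{X2|X3} are P^{X3}-independent, yet X1 and X2 are not conditionally independent given X3. (Hence (ii)+(iii) do not imply (i).) -/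
/-!
The coordinates are pairwise independent: `X₁` and `X₂` are uniform, `P(X₃ = false) = 1/4`, and
each pair of coordinates has the product joint law. Independence of `Xᵢ` and `X₃` makes
`P^{Xᵢ|X₃}` agree `P^{X₃}`-a.e. with the constant kernel `P^{Xᵢ}`, and constant kernels are
independent under any probability measure. Conditional independence still fails: the cells `010`
and `100` are empty, so `X₁ = X₂` on `{X₃ = false}`, where `X₁` is not constant.
-/

open MeasureTheory ProbabilityTheory
open scoped ENNReal

/-- Cell counts for the counterexample `C(1000,1000,0,2000,0,2000,1000,1000)`. -/
noncomputable def n8 : Bool → Bool → Bool → ℝ≥0∞ := fun i j k =>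
  match i, j, k with
  | false, false, false => 1000
  | false, false, true  => 1000
  | false, true,  false => 0
  | false, true,  true  => 2000
  | true,  false, false => 0
  | true,  false, true  => 2000
  | true,  true,  false => 1000
  | true,  true,  true  => 1000

lemma ENNReal.div_mul_div_same (a b n : ℝ≥0∞) : a / n * (b / n) = a * b / (n * n) := by
  have hn : n ≠ 0 ∨ n ≠ ∞ := (ENNReal.zero_ne_top.ne_or_ne n).imp Ne.symm Ne.symm
  rw [div_eq_mul_inv, div_eq_mul_inv, div_eq_mul_inv, mul_mul_mul_comm, ENNReal.mul_inv hn hn.symm]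

section KernelIndep

variable {α β γ : Type*} [MeasurableSpace α] [MeasurableSpace β] [MeasurableSpace γ]

lemma kernelImage_of_ae_eq_const {Q : Measure α} [IsProbabilityMeasure Q] {M : Kernel α β}
    {μ : Measure β} (h : ∀ᵐ a ∂Q, M a = μ) : kernelImage Q M = μ := by
  rw [kernelImage, Measure.bind_congr_right h, Measure.bind_const, measure_univ, one_smul]

lemma kernelIndep_of_ae_eq_const {Q : Measure α} [IsProbabilityMeasure Q] {M₁ : Kernel α β}
    {M₂ : Kernel α γ} [IsSFiniteKernel M₁] [IsSFiniteKernel M₂] {μ : Measure β} {ν : Measure γ}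
    (h₁ : ∀ᵐ a ∂Q, M₁ a = μ) (h₂ : ∀ᵐ a ∂Q, M₂ a = ν) : KernelIndep Q M₁ M₂ := by
  have h : ∀ᵐ a ∂Q, (M₁ ×ₖ M₂) a = μ.prod ν := by
    filter_upwards [h₁, h₂] with a ha₁ ha₂
    rw [Kernel.prod_apply, ha₁, ha₂]
  rw [KernelIndep, kernelImage_of_ae_eq_const h, kernelImage_of_ae_eq_const h₁,
    kernelImage_of_ae_eq_const h₂]

end KernelIndep

section Independence

variable {Ω β γ : Type*} [MeasurableSpace Ω] [MeasurableSpace β] [MeasurableSpace γ]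
  {μ : Measure Ω} {X : Ω → β} {Y : Ω → γ}

lemma condDistrib_ae_eq_of_indepFun [StandardBorelSpace γ] [Nonempty γ] [IsFiniteMeasure μ]
    (hX : Measurable X) (hY : Measurable Y) (h : IndepFun X Y μ) :
    ∀ᵐ b ∂μ.map X, condDistrib Y X μ b = μ.map Y := by
  refine (condDistrib_ae_eq_iff_measure_eq_compProd (μ := μ) X hY.aemeasurable
    (Kernel.const β (μ.map Y))).mpr ?_
  rw [Measure.compProd_const]
  exact (indepFun_iff_map_prod_eq_prod_map_map hX.aemeasurable hY.aemeasurable).mp h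

lemma kernelIndep_condDistrib_of_indepFun {δ : Type*} [MeasurableSpace δ]
    [StandardBorelSpace β] [Nonempty β] [StandardBorelSpace γ] [Nonempty γ]
    [IsProbabilityMeasure μ] {Z : Ω → δ} (hX : Measurable X) (hY : Measurable Y)
    (hZ : Measurable Z) (hZX : IndepFun Z X μ) (hZY : IndepFun Z Y μ) :
    KernelIndep (μ.map Z) (condDistrib X Z μ) (condDistrib Y Z μ) :=
  have : IsProbabilityMeasure (μ.map Z) := Measure.isProbabilityMeasure_map hZ.aemeasurable
  kernelIndep_of_ae_eq_const (condDistrib_ae_eq_of_indepFun hZ hX hZX)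
    (condDistrib_ae_eq_of_indepFun hZ hY hZY)

lemma indepFun_of_measure_preimage_singleton [Countable β] [Countable γ]
    [MeasurableSingletonClass β] [MeasurableSingletonClass γ] [IsFiniteMeasure μ]
    (hX : Measurable X) (hY : Measurable Y)
    (h : ∀ b c, μ (X ⁻¹' {b} ∩ Y ⁻¹' {c}) = μ (X ⁻¹' {b}) * μ (Y ⁻¹' {c})) :
    IndepFun X Y μ := by
  rw [indepFun_iff_map_prod_eq_prod_map_map hX.aemeasurable hY.aemeasurable,
    Measure.ext_iff_singleton]
  rintro ⟨b, c⟩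
  rw [Measure.map_apply (hX.prodMk hY) (measurableSet_singleton _),
    ← Set.singleton_prod_singleton, Measure.prod_prod,
    Measure.map_apply hX (measurableSet_singleton _), Measure.map_apply hY (measurableSet_singleton _)]
  exact h b c

end Independence

noncomputable def cellPMF : PMF (Bool × Bool × Bool) :=
  PMF.ofFintype (fun ω => n8 ω.1 ω.2.1 ω.2.2 / 8000) <| by
    norm_num [Fintype.sum_prod_type, n8, ENNReal.div_add_div_same, ENNReal.div_self]

lemma cellPMF_apply (ω : Bool × Bool × Bool) : cellPMF ω = n8 ω.1 ω.2.1 ω.2.2 / 8000 := rfl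

lemma cellPMF_toMeasure_cell (i j k : Bool) :
    cellPMF.toMeasure {ω | ω.1 = i ∧ ω.2.1 = j ∧ ω.2.2 = k} = n8 i j k / 8000 := by
  have : {ω : Bool × Bool × Bool | ω.1 = i ∧ ω.2.1 = j ∧ ω.2.2 = k} = {(i, j, k)} := by
    ext ⟨a, b, c⟩
    simp
  rw [this, PMF.toMeasure_apply_singleton _ _ (measurableSet_singleton _), cellPMF_apply]

lemma cellPMF_pairwise_indepFun :
    IndepFun (fun ω : Bool × Bool × Bool => ω.1) (fun ω => ω.2.1) cellPMF.toMeasure ∧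
    IndepFun (fun ω : Bool × Bool × Bool => ω.2.2) (fun ω => ω.1) cellPMF.toMeasure ∧
    IndepFun (fun ω : Bool × Bool × Bool => ω.2.2) (fun ω => ω.2.1) cellPMF.toMeasure := by
  refine ⟨?_, ?_, ?_⟩ <;>
    refine indepFun_of_measure_preimage_singleton (by fun_prop) (by fun_prop) fun b c => ?_ <;>
    cases b <;> cases c <;>
    norm_num [cellPMF_apply, Fintype.sum_prod_type, n8, ENNReal.div_add_div_same,
      ENNReal.div_mul_div_same, ENNReal.div_eq_div_iff]

lemma cellPMF_not_condIndep : ¬ ∀ i j k : Bool,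
    cellPMF.toMeasure {ω | ω.1 = i ∧ ω.2.1 = j ∧ ω.2.2 = k} * cellPMF.toMeasure {ω | ω.2.2 = k}
      = cellPMF.toMeasure {ω | ω.1 = i ∧ ω.2.2 = k} *
        cellPMF.toMeasure {ω | ω.2.1 = j ∧ ω.2.2 = k} := by
  intro h
  have := h false false false
  norm_num [cellPMF_apply, Fintype.sum_prod_type, n8, ENNReal.div_add_div_same,
    ENNReal.div_mul_div_same, ENNReal.div_eq_div_iff] at this

/-- There exist random variables `X1, X2, X3` on a finite probability space (uniform on 8000
points with cell counts `C(1000,1000,0,2000,0,2000,1000,1000)`) such that `X1` and `X2` are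
independent and the kernels `P^{X1|X3}` and `P^{X2|X3}` are `P^{X3}`-independent, yet `X1` and
`X2` are not conditionally independent given `X3` (elementary form:
`P(X1=i,X2=j,X3=k)·P(X3=k) = P(X1=i,X3=k)·P(X2=j,X3=k)` fails for some `i,j,k`). -/
theorem stmt8 : ∃ (Ω : Type) (_ : MeasurableSpace Ω) (P : Measure Ω)
    (_ : IsProbabilityMeasure P) (X1 X2 X3 : Ω → Bool),
    Measurable X1 ∧ Measurable X2 ∧ Measurable X3 ∧
    (∀ i j k : Bool, P {ω | X1 ω = i ∧ X2 ω = j ∧ X3 ω = k} = n8 i j k / 8000) ∧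
    IndepFun X1 X2 P ∧
    KernelIndep (P.map X3) (condDistrib X1 X3 P) (condDistrib X2 X3 P) ∧
    ¬ (∀ i j k : Bool,
        P {ω | X1 ω = i ∧ X2 ω = j ∧ X3 ω = k} * P {ω | X3 ω = k}
          = P {ω | X1 ω = i ∧ X3 ω = k} * P {ω | X2 ω = j ∧ X3 ω = k}) := by
  obtain ⟨h12, h31, h32⟩ := cellPMF_pairwise_indepFun
  exact ⟨_, _, cellPMF.toMeasure, inferInstance, _, _, _, measurable_fst, by fun_prop, by fun_prop,
    cellPMF_toMeasure_cell, h12,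
    kernelIndep_condDistrib_of_indepFun (by fun_prop) (by fun_prop) (by fun_prop) h31 h32,
    cellPMF_not_condIndep⟩
end

section
/- Conditional independence of Markov kernels M1 and M2 given M3 (on (Ω,𝒜,P)) holds if and only if the coordinate projections q1 and q2 are conditionally independent given q3 under the probability measure Q = P^{M1×M2×M3} on the product space Ω1×Ω2×Ω3. -/
open MeasureTheory ProbabilityTheory
open scoped ENNReal

/-- `L : Ω2 ⇝ Ω1` is a (regular) conditional distribution of the kernel `M1` given the kernel
`M2` on the probability space `(Ω, P)`:
`∫ M1(ω,A1)·M2(ω,A2) dP(ω) = ∫_{A2} L(ω2,A1) dP^{M2}(ω2)` for all measurable `A1, A2`. -/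
def IsCondDistribKernel {Ω Ω1 Ω2 : Type*} [MeasurableSpace Ω] [MeasurableSpace Ω1]
    [MeasurableSpace Ω2] (P : Measure Ω) (M1 : ProbabilityTheory.Kernel Ω Ω1)
    (M2 : ProbabilityTheory.Kernel Ω Ω2) (L : ProbabilityTheory.Kernel Ω2 Ω1) : Prop :=
  ∀ A1 A2 : Set _, MeasurableSet A1 → MeasurableSet A2 →
    ∫⁻ ω, M1 ω A1 * M2 ω A2 ∂P = ∫⁻ ω2 in A2, L ω2 A1 ∂(kernelImage P M2)

/-! The joint law `Q` is the image of `P` under the kernel `M1 ×ₖ (M2 ×ₖ M3)`, so each of its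
pair marginals `(q_I, q3)` is the image of `P` under a product kernel `M_I ×ₖ M3`. The defining
identity of a conditional distribution `L` of `M_I` given `M3` says exactly that this marginal
disintegrates as `P^{M3} ⊗ L`; by uniqueness of disintegrations, `L` agrees `P^{M3}`-a.e. with
`condDistrib q_I q3 Q`. Both sides of the equivalence therefore compare a.e. equal kernels. -/

section CondDistrib

variable {Ω β γ : Type*} [MeasurableSpace Ω] [MeasurableSpace β] [MeasurableSpace γ]

lemma kernelImage_eq_comp_s14 (P : Measure Ω) (κ : Kernel Ω β) : kernelImage P κ = κ ∘ₘ P := rfl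

lemma IsCondDistribKernel.comp_prod_eq_compProd {P : Measure Ω} [IsFiniteMeasure P]
    {N : Kernel Ω β} {M : Kernel Ω γ} {L : Kernel γ β} [IsFiniteKernel N] [IsFiniteKernel M]
    [IsSFiniteKernel L] (hL : IsCondDistribKernel P N M L) :
    (M ×ₖ N) ∘ₘ P = (M ∘ₘ P) ⊗ₘ L := by
  refine Measure.ext_prod fun {B A} hB hA => ?_
  rw [Measure.bind_apply (hB.prod hA) (Kernel.aemeasurable _), Measure.compProd_apply_prod hB hA,
    ← kernelImage_eq_comp_s14, ← hL A B hA hB]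
  simp_rw [Kernel.prod_apply, Measure.prod_prod, mul_comm]

lemma IsCondDistribKernel.condDistrib_ae_eq [StandardBorelSpace β] [Nonempty β]
    {α : Type*} [MeasurableSpace α] {Q : Measure α} [IsFiniteMeasure Q] {f : α → β} {g : α → γ}
    (hf : Measurable f) (hg : Measurable g) {P : Measure Ω} [IsFiniteMeasure P]
    {N : Kernel Ω β} {M : Kernel Ω γ} {L : Kernel γ β} [IsMarkovKernel N] [IsFiniteKernel M]
    [IsFiniteKernel L] (hL : IsCondDistribKernel P N M L)
    (hQ : Q.map (fun x => (f x, g x)) = (N ×ₖ M) ∘ₘ P) :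
    condDistrib f g Q =ᵐ[Q.map g] L := by
  have hg_law : Q.map g = M ∘ₘ P := by
    rw [← Kernel.snd_prod N M, Kernel.snd_eq, ← Measure.map_comp _ _ measurable_snd, ← hQ,
      Measure.map_map measurable_snd (hf.prodMk hg)]
    rfl
  have hgf_law : Q.map (fun x => (g x, f x)) = (M ×ₖ N) ∘ₘ P := by
    rw [← Kernel.map_prod_swap, ← Measure.map_comp _ _ measurable_swap, ← hQ,
      Measure.map_map measurable_swap (hf.prodMk hg)]
    rfl
  refine condDistrib_ae_eq_of_measure_eq_compProd_of_measurable hg hf ?_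
  rw [hg_law, ← hL.comp_prod_eq_compProd, hgf_law]

end CondDistrib

lemma ProbabilityTheory.Kernel.ae_prod_iff_of_ae_eq {γ β₁ β₂ : Type*} [MeasurableSpace γ]
    [MeasurableSpace β₁] [MeasurableSpace β₂] {μ : Measure γ} {κ₁ η₁ : Kernel γ β₁}
    {κ₂ η₂ : Kernel γ β₂} {κ η : Kernel γ (β₁ × β₂)}
    [IsSFiniteKernel κ₁] [IsSFiniteKernel η₁] [IsSFiniteKernel κ₂] [IsSFiniteKernel η₂]
    (h₁ : κ₁ =ᵐ[μ] η₁) (h₂ : κ₂ =ᵐ[μ] η₂) (h : κ =ᵐ[μ] η) :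
    (∀ᵐ c ∂μ, κ c = (κ₁ ×ₖ κ₂) c) ↔ ∀ᵐ c ∂μ, η c = (η₁ ×ₖ η₂) c :=
  Filter.eventually_congr <| (h₁.and (h₂.and h)).mono fun c ⟨e₁, e₂, e⟩ => by
    rw [Kernel.prod_apply, Kernel.prod_apply, e₁, e₂, e]

section TripleProduct

variable {Ω Ω1 Ω2 Ω3 : Type*} [MeasurableSpace Ω] [MeasurableSpace Ω1] [MeasurableSpace Ω2]
  [MeasurableSpace Ω3] (M1 : Kernel Ω Ω1) (M2 : Kernel Ω Ω2) (M3 : Kernel Ω Ω3)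

lemma ProbabilityTheory.Kernel.map_fst_snd_snd_prod
    [IsSFiniteKernel M1] [IsMarkovKernel M2] [IsSFiniteKernel M3] :
    (M1 ×ₖ (M2 ×ₖ M3)).map (fun x => (x.1, x.2.2)) = M1 ×ₖ M3 := by
  rw [show (fun x : Ω1 × Ω2 × Ω3 => (x.1, x.2.2)) = Prod.map id Prod.snd from rfl,
    ← Kernel.map_prod_map _ _ measurable_id measurable_snd, Kernel.map_id, ← Kernel.snd_eq,
    Kernel.snd_prod]

lemma ProbabilityTheory.Kernel.map_snd_snd_prod
    [IsMarkovKernel M1] [IsMarkovKernel M2] [IsSFiniteKernel M3] :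
    (M1 ×ₖ (M2 ×ₖ M3)).map (fun x => x.2.2) = M3 := by
  rw [show (fun x : Ω1 × Ω2 × Ω3 => x.2.2) = Prod.snd ∘ Prod.snd from rfl,
    Kernel.map_comp_right _ measurable_snd measurable_snd, ← Kernel.snd_eq, ← Kernel.snd_eq,
    Kernel.snd_prod, Kernel.snd_prod]

end TripleProduct

/-- Conditional independence of the Markov kernels `M1` and `M2` given `M3` holds iff the
coordinate projections `q1` and `q2` are conditionally independent given `q3` under
`Q = P^{M1×M2×M3}` on `Ω1 × Ω2 × Ω3`. -/
theorem stmt14 {Ω Ω1 Ω2 Ω3 : Type*} [MeasurableSpace Ω] [MeasurableSpace Ω1]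
    [MeasurableSpace Ω2] [MeasurableSpace Ω3]
    [StandardBorelSpace Ω1] [Nonempty Ω1] [StandardBorelSpace Ω2] [Nonempty Ω2]
    (P : Measure Ω) [IsProbabilityMeasure P]
    (M1 : ProbabilityTheory.Kernel Ω Ω1) (M2 : ProbabilityTheory.Kernel Ω Ω2)
    (M3 : ProbabilityTheory.Kernel Ω Ω3)
    [IsMarkovKernel M1] [IsMarkovKernel M2] [IsMarkovKernel M3]
    (L1 : ProbabilityTheory.Kernel Ω3 Ω1) (L2 : ProbabilityTheory.Kernel Ω3 Ω2)
    (L12 : ProbabilityTheory.Kernel Ω3 (Ω1 × Ω2))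
    [IsMarkovKernel L1] [IsMarkovKernel L2] [IsMarkovKernel L12]
    (hL1 : IsCondDistribKernel P M1 M3 L1)
    (hL2 : IsCondDistribKernel P M2 M3 L2)
    (hL12 : IsCondDistribKernel P (M1 ×ₖ M2) M3 L12)
    (Q : Measure (Ω1 × Ω2 × Ω3)) [IsProbabilityMeasure Q]
    (hQ : Q = P.bind (fun ω => (M1 ω).prod ((M2 ω).prod (M3 ω)))) :
    (∀ᵐ ω3 ∂(kernelImage P M3), L12 ω3 = (L1 ×ₖ L2) ω3) ↔
      (∀ᵐ ω3 ∂(Q.map (fun x => x.2.2)),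
        condDistrib (fun x : Ω1 × Ω2 × Ω3 => (x.1, x.2.1)) (fun x => x.2.2) Q ω3
          = ((condDistrib (fun x : Ω1 × Ω2 × Ω3 => x.1) (fun x => x.2.2) Q) ×ₖ
              (condDistrib (fun x : Ω1 × Ω2 × Ω3 => x.2.1) (fun x => x.2.2) Q)) ω3) := by
  have hQ' : Q = (M1 ×ₖ (M2 ×ₖ M3)) ∘ₘ P := by
    rw [hQ]
    congr 1 with ω : 1
    rw [Kernel.prod_apply, Kernel.prod_apply]
  have h1 := hL1.condDistrib_ae_eq (Q := Q) measurable_fst measurable_snd.snd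
    (by rw [hQ', Measure.map_comp _ _ (by fun_prop), Kernel.map_fst_snd_snd_prod])
  have h2 := hL2.condDistrib_ae_eq (Q := Q) measurable_snd.fst measurable_snd.snd
    (by rw [hQ', Measure.map_comp _ _ measurable_snd, ← Kernel.snd_eq, Kernel.snd_prod])
  have h12 := hL12.condDistrib_ae_eq (Q := Q) (f := fun x => (x.1, x.2.1)) (by fun_prop)
    measurable_snd.snd (by
      rw [hQ', Measure.map_comp _ _ (by fun_prop), ← Kernel.prodAssoc_symm_prod M1 M3 M2]
      rfl)
  have hQ3 : kernelImage P M3 = Q.map (fun x => x.2.2) := by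
    rw [hQ', Measure.map_comp _ _ measurable_snd.snd, Kernel.map_snd_snd_prod]
    rfl
  rw [hQ3]
  exact (Kernel.ae_prod_iff_of_ae_eq h1 h2 h12).symm
end

section
/- Density characterization of kernel conditioning: Suppose M_i(ω,·) = φ_i(ω,·) μ_i with φ_i jointly measurable nonnegative, μ_i σ-finite, i=1,2,3. Then ω3 ↦ ∫_Ω φ_3(ω,ω3) dP(ω) is a μ3-density of P^{M3}, and for i=1,2 the conditional distribution P^{M_i|M_3} exists with, for P^{M3}-a.e. ω3, the map ω_i ↦ (∫_Ω φ_i(ω,ω_i)φ_3(ω,ω3)dP(ω)) / (∫_Ω φ_3(ω,ω3)dP(ω)) being a μ_i-density of P^{M_i|M_3}(ω3,·). -/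
/-! By Tonelli, `P^{M3}` has `μ3`-density `g(ω3) = ∫ φ3(ω,ω3) dP(ω)` and the joint law
`∫ M1(ω,·) M3(ω,·) dP` has `μ1 ⊗ μ3`-density `f(ω1,ω3) = ∫ φ1(ω,ω1) φ3(ω,ω3) dP(ω)`.
The conditional kernel is `f / g`: multiplying back by `g` recovers `f` wherever `g` is finite
(where `g = 0`, also `f = 0`), and `g < ∞` holds `μ3`-a.e. because `P^{M3}` is finite. -/

open MeasureTheory ProbabilityTheory
open scoped ENNReal

theorem lintegral_mul_eq_zero_of_lintegral_eq_zero {α : Type*} [MeasurableSpace α]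
    {μ : Measure α} {f g : α → ℝ≥0∞} (hg : Measurable g) (h : ∫⁻ x, g x ∂μ = 0) :
    ∫⁻ x, f x * g x ∂μ = 0 := by
  refine (lintegral_congr_ae ?_).trans lintegral_zero
  filter_upwards [(lintegral_eq_zero_iff hg).mp h] with x hx
  simp [hx]

theorem mul_setLIntegral_div_eq {α : Type*} [MeasurableSpace α] {μ : Measure α} {s : Set α}
    {f : α → ℝ≥0∞} {c : ℝ≥0∞} (hc : c ≠ ∞) (hf : c = 0 → ∀ x, f x = 0) :
    c * ∫⁻ x in s, f x / c ∂μ = ∫⁻ x in s, f x ∂μ := by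
  rw [← lintegral_const_mul' _ _ hc]
  exact lintegral_congr fun x =>
    ENNReal.mul_div_cancel' (fun h0 => hf h0 x) (fun h => absurd h hc)

section

variable {Ω Ω1 Ω3 : Type*} [MeasurableSpace Ω] [MeasurableSpace Ω1] [MeasurableSpace Ω3]

theorem kernelImage_eq_withDensity_lintegral (P : Measure Ω) [SFinite P] {M : Kernel Ω Ω3}
    {μ : Measure Ω3} [SFinite μ] {φ : Ω → Ω3 → ℝ≥0∞} (hφ : Measurable (Function.uncurry φ))
    (hM : ∀ ω, M ω = μ.withDensity (φ ω)) :
    kernelImage P M = μ.withDensity (fun ω3 => ∫⁻ ω, φ ω ω3 ∂P) := by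
  ext A hA
  rw [kernelImage, Measure.bind_apply hA M.measurable.aemeasurable, withDensity_apply _ hA]
  calc ∫⁻ ω, M ω A ∂P = ∫⁻ ω, ∫⁻ ω3 in A, φ ω ω3 ∂μ ∂P := by
        simp_rw [hM, withDensity_apply _ hA]
    _ = ∫⁻ ω3 in A, ∫⁻ ω, φ ω ω3 ∂P ∂μ := lintegral_lintegral_swap hφ.aemeasurable

theorem ae_lintegral_density_lt_top (P : Measure Ω) [IsFiniteMeasure P] {M : Kernel Ω Ω3}
    [IsFiniteKernel M] {μ : Measure Ω3} [SFinite μ] {φ : Ω → Ω3 → ℝ≥0∞}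
    (hφ : Measurable (Function.uncurry φ)) (hM : ∀ ω, M ω = μ.withDensity (φ ω)) :
    ∀ᵐ ω3 ∂μ, ∫⁻ ω, φ ω ω3 ∂P < ∞ := by
  have hfin : ∫⁻ ω3, ∫⁻ ω, φ ω ω3 ∂P ∂μ ≠ ∞ := by
    have : IsFiniteMeasure (kernelImage P M) := inferInstanceAs (IsFiniteMeasure (M ∘ₘ P))
    simpa [kernelImage_eq_withDensity_lintegral P hφ hM] using
      measure_ne_top (kernelImage P M) Set.univ
  exact ae_lt_top hφ.lintegral_prod_left' hfin

theorem lintegral_apply_mul_apply_eq_setLIntegral (P : Measure Ω) [SFinite P]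
    {M1 : Kernel Ω Ω1} {M3 : Kernel Ω Ω3} {μ1 : Measure Ω1} {μ3 : Measure Ω3} [SFinite μ1]
    [SFinite μ3] {φ1 : Ω → Ω1 → ℝ≥0∞} {φ3 : Ω → Ω3 → ℝ≥0∞}
    (hφ1 : Measurable (Function.uncurry φ1)) (hφ3 : Measurable (Function.uncurry φ3))
    (hM1 : ∀ ω, M1 ω = μ1.withDensity (φ1 ω)) (hM3 : ∀ ω, M3 ω = μ3.withDensity (φ3 ω))
    {A1 : Set Ω1} {A3 : Set Ω3} (hA1 : MeasurableSet A1) (hA3 : MeasurableSet A3) :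
    ∫⁻ ω, M1 ω A1 * M3 ω A3 ∂P
      = ∫⁻ ω3 in A3, ∫⁻ ω1 in A1, ∫⁻ ω, φ1 ω ω1 * φ3 ω ω3 ∂P ∂μ1 ∂μ3 := by
  have h3 : ∀ ω, M1 ω A1 * M3 ω A3 = ∫⁻ ω3 in A3, M1 ω A1 * φ3 ω ω3 ∂μ3 := fun ω => by
    rw [hM3, withDensity_apply _ hA3, lintegral_const_mul _ hφ3.of_uncurry_left]
  have h1 : ∀ ω ω3, M1 ω A1 * φ3 ω ω3 = ∫⁻ ω1 in A1, φ1 ω ω1 * φ3 ω ω3 ∂μ1 := fun ω ω3 => by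
    rw [hM1, withDensity_apply _ hA1, lintegral_mul_const _ hφ1.of_uncurry_left]
  simp_rw [h3, h1]
  rw [lintegral_lintegral_swap (by fun_prop)]
  exact lintegral_congr fun ω3 => lintegral_lintegral_swap (by fun_prop)

-- Where `∫ φ3(ω,ω3) dP(ω) = 0` the density is `0 / 0 = 0`, so this is the zero measure
-- there; that set of `ω3` is `P^{M3}`-null.
noncomputable def condDensityKernel (P : Measure Ω) (μ1 : Measure Ω1) [SFinite μ1]
    (φ1 : Ω → Ω1 → ℝ≥0∞) (φ3 : Ω → Ω3 → ℝ≥0∞) : Kernel Ω3 Ω1 :=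
  Kernel.withDensity (Kernel.const Ω3 μ1)
    fun ω3 ω1 => (∫⁻ ω, φ1 ω ω1 * φ3 ω ω3 ∂P) / ∫⁻ ω, φ3 ω ω3 ∂P

theorem condDensityKernel_apply (P : Measure Ω) [SFinite P] (μ1 : Measure Ω1) [SFinite μ1]
    {φ1 : Ω → Ω1 → ℝ≥0∞} {φ3 : Ω → Ω3 → ℝ≥0∞}
    (hφ1 : Measurable (Function.uncurry φ1)) (hφ3 : Measurable (Function.uncurry φ3))
    (ω3 : Ω3) :
    condDensityKernel P μ1 φ1 φ3 ω3
      = μ1.withDensity fun ω1 => (∫⁻ ω, φ1 ω ω1 * φ3 ω ω3 ∂P) / ∫⁻ ω, φ3 ω ω3 ∂P := by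
  rw [condDensityKernel, Kernel.withDensity_apply _ (by fun_prop), Kernel.const_apply]

theorem isCondDistribKernel_condDensityKernel (P : Measure Ω) [IsFiniteMeasure P]
    {M1 : Kernel Ω Ω1} {M3 : Kernel Ω Ω3} [IsFiniteKernel M3] {μ1 : Measure Ω1}
    {μ3 : Measure Ω3} [SFinite μ1] [SFinite μ3] {φ1 : Ω → Ω1 → ℝ≥0∞} {φ3 : Ω → Ω3 → ℝ≥0∞}
    (hφ1 : Measurable (Function.uncurry φ1)) (hφ3 : Measurable (Function.uncurry φ3))
    (hM1 : ∀ ω, M1 ω = μ1.withDensity (φ1 ω)) (hM3 : ∀ ω, M3 ω = μ3.withDensity (φ3 ω)) :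
    IsCondDistribKernel P M1 M3 (condDensityKernel P μ1 φ1 φ3) := by
  intro A1 A3 hA1 hA3
  rw [lintegral_apply_mul_apply_eq_setLIntegral P hφ1 hφ3 hM1 hM3 hA1 hA3,
    kernelImage_eq_withDensity_lintegral P hφ3 hM3, restrict_withDensity hA3,
    lintegral_withDensity_eq_lintegral_mul (μ3.restrict A3)
      (f := fun ω3 => ∫⁻ ω, φ3 ω ω3 ∂P) (by fun_prop)
      ((condDensityKernel P μ1 φ1 φ3).measurable_coe hA1)]
  refine setLIntegral_congr_fun_ae hA3 ?_
  filter_upwards [ae_lintegral_density_lt_top P hφ3 hM3] with ω3 hfin _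
  rw [Pi.mul_apply, condDensityKernel_apply P μ1 hφ1 hφ3, withDensity_apply _ hA1,
    mul_setLIntegral_div_eq hfin.ne
      fun h0 _ => lintegral_mul_eq_zero_of_lintegral_eq_zero hφ3.of_uncurry_right h0]

end

theorem stmt15_general {Ω Ω1 Ω2 Ω3 : Type*} [MeasurableSpace Ω] [MeasurableSpace Ω1]
    [MeasurableSpace Ω2] [MeasurableSpace Ω3]
    (P : Measure Ω) [IsProbabilityMeasure P]
    (M1 : ProbabilityTheory.Kernel Ω Ω1) (M2 : ProbabilityTheory.Kernel Ω Ω2)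
    (M3 : ProbabilityTheory.Kernel Ω Ω3)
    [IsMarkovKernel M3]
    (μ1 : Measure Ω1) (μ2 : Measure Ω2) (μ3 : Measure Ω3)
    [SigmaFinite μ1] [SigmaFinite μ2] [SigmaFinite μ3]
    (φ1 : Ω → Ω1 → ℝ≥0∞) (φ2 : Ω → Ω2 → ℝ≥0∞) (φ3 : Ω → Ω3 → ℝ≥0∞)
    (hφ1 : Measurable (Function.uncurry φ1)) (hφ2 : Measurable (Function.uncurry φ2))
    (hφ3 : Measurable (Function.uncurry φ3))
    (hM1 : ∀ ω, M1 ω = μ1.withDensity (φ1 ω))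
    (hM2 : ∀ ω, M2 ω = μ2.withDensity (φ2 ω))
    (hM3 : ∀ ω, M3 ω = μ3.withDensity (φ3 ω)) :
    kernelImage P M3 = μ3.withDensity (fun ω3 => ∫⁻ ω, φ3 ω ω3 ∂P) ∧
    (∃ L1 : ProbabilityTheory.Kernel Ω3 Ω1, IsCondDistribKernel P M1 M3 L1 ∧
      ∀ᵐ ω3 ∂(kernelImage P M3),
        L1 ω3 = μ1.withDensity
          (fun ω1 => (∫⁻ ω, φ1 ω ω1 * φ3 ω ω3 ∂P) / ∫⁻ ω, φ3 ω ω3 ∂P)) ∧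
    (∃ L2 : ProbabilityTheory.Kernel Ω3 Ω2, IsCondDistribKernel P M2 M3 L2 ∧
      ∀ᵐ ω3 ∂(kernelImage P M3),
        L2 ω3 = μ2.withDensity
          (fun ω2 => (∫⁻ ω, φ2 ω ω2 * φ3 ω ω3 ∂P) / ∫⁻ ω, φ3 ω ω3 ∂P)) := by
  exact ⟨kernelImage_eq_withDensity_lintegral P hφ3 hM3,
    ⟨_, isCondDistribKernel_condDensityKernel P hφ1 hφ3 hM1 hM3,
      .of_forall (condDensityKernel_apply P μ1 hφ1 hφ3)⟩,
    ⟨_, isCondDistribKernel_condDensityKernel P hφ2 hφ3 hM2 hM3,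
      .of_forall (condDensityKernel_apply P μ2 hφ2 hφ3)⟩⟩

/-- Density characterization of kernel conditioning: if `M_i(ω,·) = φ_i(ω,·)·μ_i`, then
`ω3 ↦ ∫ φ_3(ω,ω3) dP(ω)` is a `μ3`-density of `P^{M3}`, and for `i = 1, 2` the conditional
distribution `P^{M_i|M_3}` exists and, `P^{M3}`-a.e., has `μ_i`-density
`ω_i ↦ (∫ φ_i(ω,ω_i)·φ_3(ω,ω3) dP(ω)) / (∫ φ_3(ω,ω3) dP(ω))`. -/
theorem stmt15 {Ω Ω1 Ω2 Ω3 : Type*} [MeasurableSpace Ω] [MeasurableSpace Ω1]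
    [MeasurableSpace Ω2] [MeasurableSpace Ω3]
    (P : Measure Ω) [IsProbabilityMeasure P]
    (M1 : ProbabilityTheory.Kernel Ω Ω1) (M2 : ProbabilityTheory.Kernel Ω Ω2)
    (M3 : ProbabilityTheory.Kernel Ω Ω3)
    [IsMarkovKernel M1] [IsMarkovKernel M2] [IsMarkovKernel M3]
    (μ1 : Measure Ω1) (μ2 : Measure Ω2) (μ3 : Measure Ω3)
    [SigmaFinite μ1] [SigmaFinite μ2] [SigmaFinite μ3]
    (φ1 : Ω → Ω1 → ℝ≥0∞) (φ2 : Ω → Ω2 → ℝ≥0∞) (φ3 : Ω → Ω3 → ℝ≥0∞)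
    (hφ1 : Measurable (Function.uncurry φ1)) (hφ2 : Measurable (Function.uncurry φ2))
    (hφ3 : Measurable (Function.uncurry φ3))
    (hM1 : ∀ ω, M1 ω = μ1.withDensity (φ1 ω))
    (hM2 : ∀ ω, M2 ω = μ2.withDensity (φ2 ω))
    (hM3 : ∀ ω, M3 ω = μ3.withDensity (φ3 ω)) :
    kernelImage P M3 = μ3.withDensity (fun ω3 => ∫⁻ ω, φ3 ω ω3 ∂P) ∧
    (∃ L1 : ProbabilityTheory.Kernel Ω3 Ω1, IsCondDistribKernel P M1 M3 L1 ∧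
      ∀ᵐ ω3 ∂(kernelImage P M3),
        L1 ω3 = μ1.withDensity
          (fun ω1 => (∫⁻ ω, φ1 ω ω1 * φ3 ω ω3 ∂P) / ∫⁻ ω, φ3 ω ω3 ∂P)) ∧
    (∃ L2 : ProbabilityTheory.Kernel Ω3 Ω2, IsCondDistribKernel P M2 M3 L2 ∧
      ∀ᵐ ω3 ∂(kernelImage P M3),
        L2 ω3 = μ2.withDensity
          (fun ω2 => (∫⁻ ω, φ2 ω ω2 * φ3 ω ω3 ∂P) / ∫⁻ ω, φ3 ω ω3 ∂P)) :=
  stmt15_general P M1 M2 M3 μ1 μ2 μ3 φ1 φ2 φ3 hφ1 hφ2 hφ3 hM1 hM2 hM3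
end

section
/- If X4 = f∘X3, then under conditional independence of X1 and X2 given X3, the conditional distribution (with respect to P^{X3}) of the diagonal product kernel P^{X1|X3} × P^{X2|X3} given the kernel P^{X4|X3} equals the conditional distribution P^{(X1,X2)|X4}; moreover (without assuming conditional independence), the conditional distribution of P^{X_i|X3} given P^{X4|X3} equals P^{X_i|X4}, for i=1,2. -/
open MeasureTheory ProbabilityTheory
open scoped ENNReal

/-!
Since `X4 = f ∘ X3`, the kernel `P^{X4|X3}` is a.e. the deterministic kernel of `f`. For `Y` one
of `X1`, `X2`, `(X1, X2)`, the defining identity of `L` then says that the joint law of `(X3, Y)`,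
pushed forward along `f × id`, is `P^{X4} ⊗ L`; as this push-forward is the joint law of
`(X4, Y)`, uniqueness of disintegrations gives `L = P^{Y|X4}`. For `Y = (X1, X2)`, conditional
independence identifies the product kernel with `P^{Y|X3}`.
-/

open MeasureTheory ProbabilityTheory Filter

namespace IsCondDistribKernel

variable {Ω Ω1 Ω2 : Type*} [MeasurableSpace Ω] [MeasurableSpace Ω1] [MeasurableSpace Ω2]
  {P : Measure Ω} {M M' : Kernel Ω Ω1} {N N' : Kernel Ω Ω2} {L : Kernel Ω2 Ω1}

lemma congr_left (h : IsCondDistribKernel P M N L) (hM : M =ᵐ[P] M') :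
    IsCondDistribKernel P M' N L := by
  intro A1 A2 hA1 hA2
  rw [← h A1 A2 hA1 hA2]
  refine lintegral_congr_ae ?_
  filter_upwards [hM] with ω hω
  rw [hω]

lemma congr_right (h : IsCondDistribKernel P M N L) (hN : N =ᵐ[P] N') :
    IsCondDistribKernel P M N' L := by
  intro A1 A2 hA1 hA2
  have himage : kernelImage P N' = kernelImage P N := Measure.comp_congr hN.symm
  rw [himage, ← h A1 A2 hA1 hA2]
  refine lintegral_congr_ae ?_
  filter_upwards [hN] with ω hω
  rw [hω]

lemma map_compProd_eq_of_deterministic [IsFiniteMeasure P] [IsFiniteKernel M] [IsSFiniteKernel L]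
    {f : Ω → Ω2} (hf : Measurable f)
    (h : IsCondDistribKernel P M (Kernel.deterministic f hf) L) :
    (P ⊗ₘ M).map (Prod.map f id) = P.map f ⊗ₘ L := by
  have himage : kernelImage P (Kernel.deterministic f hf) = P.map f :=
    Measure.deterministic_comp_eq_map hf
  refine Measure.ext_prod fun {A2 A1} hA2 hA1 => ?_
  rw [Measure.map_apply (hf.prodMap measurable_id) (hA2.prod hA1), Set.preimage_prod_map_prod,
    Set.preimage_id, Measure.compProd_apply_prod (hf hA2) hA1, Measure.compProd_apply_prod hA2 hA1,
    ← himage, ← h A1 A2 hA1 hA2, ← lintegral_indicator (hf hA2)]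
  refine lintegral_congr fun ω => ?_
  by_cases hω : f ω ∈ A2 <;> simp [Kernel.deterministic_apply' hf _ hA2, hω]

end IsCondDistribKernel

theorem condDistrib_comp_ae_eq_of_isCondDistribKernel {Ω β γ Ω' : Type*} [MeasurableSpace Ω]
    [MeasurableSpace β] [MeasurableSpace γ] [MeasurableSpace Ω'] [StandardBorelSpace γ]
    [Nonempty γ] [StandardBorelSpace Ω'] [Nonempty Ω'] {P : Measure Ω} [IsFiniteMeasure P]
    {X : Ω → β} {Y : Ω → Ω'} {f : β → γ} (hX : Measurable X) (hY : Measurable Y)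
    (hf : Measurable f) {L : Kernel γ Ω'} [IsFiniteKernel L]
    (hL : IsCondDistribKernel (P.map X) (condDistrib Y X P) (condDistrib (f ∘ X) X P) L) :
    condDistrib Y (f ∘ X) P =ᵐ[P.map (f ∘ X)] L := by
  refine condDistrib_ae_eq_of_measure_eq_compProd_of_measurable (hf.comp hX) hY ?_
  calc P.map (fun ω => ((f ∘ X) ω, Y ω))
      = (P.map (fun ω => (X ω, Y ω))).map (Prod.map f id) := by
        rw [Measure.map_map (hf.prodMap measurable_id) (hX.prodMk hY)]
        rfl
    _ = (P.map X ⊗ₘ condDistrib Y X P).map (Prod.map f id) := by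
        rw [compProd_map_condDistrib hY.aemeasurable]
    _ = (P.map X).map f ⊗ₘ L :=
        (hL.congr_right (condDistrib_comp_self X hf)).map_compProd_eq_of_deterministic hf
    _ = P.map (f ∘ X) ⊗ₘ L := by rw [Measure.map_map hf hX]

/-- If `X4 = f ∘ X3`: under conditional independence of `X1, X2` given `X3`, the conditional
distribution (w.r.t. `P^{X3}`) of the diagonal product kernel `P^{X1|X3} ×ₖ P^{X2|X3}` given
the kernel `P^{X4|X3}` equals `P^{(X1,X2)|X4}`; and, without assuming conditional independence,
the conditional distribution of `P^{Xi|X3}` given `P^{X4|X3}` equals `P^{Xi|X4}`, `i = 1, 2`. -/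
theorem stmt18 {Ω Ω1 Ω2 Ω3 Ω4 : Type*} [MeasurableSpace Ω] [MeasurableSpace Ω1]
    [MeasurableSpace Ω2] [MeasurableSpace Ω3] [MeasurableSpace Ω4]
    [StandardBorelSpace Ω1] [Nonempty Ω1] [StandardBorelSpace Ω2] [Nonempty Ω2]
    [StandardBorelSpace Ω4] [Nonempty Ω4]
    (P : Measure Ω) [IsProbabilityMeasure P]
    (X1 : Ω → Ω1) (X2 : Ω → Ω2) (X3 : Ω → Ω3) (X4 : Ω → Ω4) (f : Ω3 → Ω4)
    (hX1 : Measurable X1) (hX2 : Measurable X2) (hX3 : Measurable X3) (hf : Measurable f)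
    (hX4 : X4 = f ∘ X3)
    (L1 : ProbabilityTheory.Kernel Ω4 Ω1) (L2 : ProbabilityTheory.Kernel Ω4 Ω2)
    (L12 : ProbabilityTheory.Kernel Ω4 (Ω1 × Ω2))
    [IsMarkovKernel L1] [IsMarkovKernel L2] [IsMarkovKernel L12]
    (hL1 : IsCondDistribKernel (P.map X3) (condDistrib X1 X3 P) (condDistrib X4 X3 P) L1)
    (hL2 : IsCondDistribKernel (P.map X3) (condDistrib X2 X3 P) (condDistrib X4 X3 P) L2)
    (hL12 : IsCondDistribKernel (P.map X3)
      (condDistrib X1 X3 P ×ₖ condDistrib X2 X3 P) (condDistrib X4 X3 P) L12) :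
    ((∀ᵐ ω3 ∂(P.map X3),
        condDistrib (fun ω => (X1 ω, X2 ω)) X3 P ω3
          = (condDistrib X1 X3 P ×ₖ condDistrib X2 X3 P) ω3) →
      ∀ᵐ ω4 ∂(P.map X4), L12 ω4 = condDistrib (fun ω => (X1 ω, X2 ω)) X4 P ω4) ∧
    (∀ᵐ ω4 ∂(P.map X4), L1 ω4 = condDistrib X1 X4 P ω4) ∧
    (∀ᵐ ω4 ∂(P.map X4), L2 ω4 = condDistrib X2 X4 P ω4) := by
  subst hX4
  refine ⟨fun hCondIndep => ?_, ?_, ?_⟩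
  · exact (condDistrib_comp_ae_eq_of_isCondDistribKernel hX3 (hX1.prodMk hX2) hf
      (hL12.congr_left (EventuallyEq.symm hCondIndep))).symm
  · exact (condDistrib_comp_ae_eq_of_isCondDistribKernel hX3 hX1 hf hL1).symm
  · exact (condDistrib_comp_ae_eq_of_isCondDistribKernel hX3 hX2 hf hL2).symm
end
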